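/- Let P₁ be the logic program over Σ₁ = {nat/1, s/1, 0/0} with clauses nat(0) ← and nat(s(X)) ← nat(X). For every goal clause C = ? ← t with t a finite term over Σ₁ and every idempotent substitution σ, the rewriting tree rew(P₁, C, σ) is finite; that is, P₁ is observationally productive. -/

import Mathlib

/-!
Every and-node of `rew(P₁, ? ← t, σ)` carries a finite atom fixed by `σ`; for the root atom
`σ(t)` this is idempotence of `σ`. Matching such an atom against `nat(0)` produces a leaf, and
matching it against `nat(s(Y))` forces it to be `nat(s(r))` with `σ(r) = r`, producing the single
new atom `nat(r)`, again `σ`-fixed and one node smaller. Induction on the size of the atom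
therefore bounds every subtree.
-/

namespace T3C

/-- A (finitely branching) tree language: prefix-closed, closed under smaller
sibling indices, and finitely branching. -/
def IsTreeLang (L : Set (List ℕ)) : Prop :=
  (∀ (w : List ℕ) (j : ℕ), w ++ [j] ∈ L → w ∈ L) ∧
  (∀ (w : List ℕ) (i j : ℕ), w ++ [j] ∈ L → i < j → w ++ [i] ∈ L) ∧
  (∀ w ∈ L, { i : ℕ | w ++ [i] ∈ L }.Finite)

/-- A term tree over a signature `Sig` (with arity function `ar`) and
variables `V` (each of arity `0`): a function from a non-empty tree language
to `Sig ⊕ V` satisfying the arity condition.  Nodes outside the domain are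
labelled `none`. -/
structure Tm (Sig V : Type) (ar : Sig → ℕ) where
  label : List ℕ → Option (Sig ⊕ V)
  root : label [] ≠ none
  tl : IsTreeLang { w | label w ≠ none }
  arity : ∀ w a, label w = some a →
    { i : ℕ | label (w ++ [i]) ≠ none }.ncard = Sum.elim ar (fun _ => 0) a

variable {Sig V : Type} {ar : Sig → ℕ}

/-- A term tree is finite if its domain tree language is finite. -/
def Tm.Fin (t : Tm Sig V ar) : Prop := { w | t.label w ≠ none }.Finite

/-- A substitution: a total function from variables to finite term trees. -/
structure Subst (Sig V : Type) (ar : Sig → ℕ) where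
  toFun : V → Tm Sig V ar
  fin : ∀ X, (toFun X).Fin

/-- Auxiliary function computing the label of `σ(t)` at `u ++ v`, scanning
the word for the first variable node of `t`. -/
def subAppAux (σ : V → Tm Sig V ar) (t : Tm Sig V ar) :
    List ℕ → List ℕ → Option (Sig ⊕ V)
  | u, [] =>
    match t.label u with
    | some (Sum.inr X) => (σ X).label []
    | o => o
  | u, i :: v =>
    match t.label u with
    | some (Sum.inr X) => (σ X).label (i :: v)
    | _ => subAppAux σ t (u ++ [i]) v

/-- `sapp σ t` is the label function of the application `σ(t)` of the
substitution `σ` to the term tree `t`. -/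
def sapp (σ : Subst Sig V ar) (t : Tm Sig V ar) : List ℕ → Option (Sig ⊕ V) :=
  subAppAux σ.toFun t []

/-- `σ` is a matcher of `t` against `u` iff `σ(t) = u`. -/
def IsMatcher (σ : Subst Sig V ar) (t u : Tm Sig V ar) : Prop :=
  sapp σ t = u.label

/-- `σ` is a unifier of `t` and `u` iff `σ(t) = σ(u)`. -/
def IsUnifier (σ : Subst Sig V ar) (t u : Tm Sig V ar) : Prop :=
  sapp σ t = sapp σ u

/-- `σ₁` is more general than `σ₂` iff `σσ₁ = σ₂` for some substitution `σ`. -/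
def MoreGen (σ₁ σ₂ : Subst Sig V ar) : Prop :=
  ∃ σ : Subst Sig V ar, ∀ X, sapp σ (σ₁.toFun X) = (σ₂.toFun X).label

/-- A most general matcher of `t` against `u`. -/
def IsMGM (θ : Subst Sig V ar) (t u : Tm Sig V ar) : Prop :=
  IsMatcher θ t u ∧ ∀ θ' : Subst Sig V ar, IsMatcher θ' t u → MoreGen θ θ'

/-- A most general unifier of `t` and `u`. -/
def IsMGU (σ : Subst Sig V ar) (t u : Tm Sig V ar) : Prop :=
  IsUnifier σ t u ∧ ∀ σ' : Subst Sig V ar, IsUnifier σ' t u → MoreGen σ σ'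

/-- Idempotence: `σσ = σ`. -/
def Idem (σ : Subst Sig V ar) : Prop :=
  ∀ X, sapp σ (σ.toFun X) = (σ.toFun X).label

open scoped Classical

/-- The term tree consisting of a single variable node. -/
def varTm (X : V) : Tm Sig V ar where
  label := fun w => if w = [] then some (Sum.inr X) else none
  root := by simp
  tl := by
    refine ⟨?_, ?_, ?_⟩
    · intro w j hwj
      exfalso
      simp only [Set.mem_setOf_eq] at hwj
      rw [if_neg (by simp)] at hwj
      exact hwj rfl
    · intro w i j hwj hij
      exfalso
      simp only [Set.mem_setOf_eq] at hwj
      rw [if_neg (by simp)] at hwj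
      exact hwj rfl
    · intro w _
      apply Set.Finite.subset Set.finite_empty
      intro i hi
      simp only [Set.mem_setOf_eq] at hi
      rw [if_neg (by simp)] at hi
      exact absurd rfl hi
  arity := by
    intro w a hwa
    by_cases hw : w = []
    · subst hw
      simp only [if_pos rfl] at hwa
      cases Option.some.inj hwa
      have hset : { i : ℕ |
          (fun w => if w = ([] : List ℕ) then some (Sum.inr X : Sig ⊕ V) else none)
            (([] : List ℕ) ++ [i]) ≠ none } = ∅ := by
        ext i
        simp
      rw [hset]
      simp
    · simp only [if_neg hw] at hwa
      exact absurd hwa (by simp)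

lemma varTm_fin (X : V) : (varTm X : Tm Sig V ar).Fin := by
  apply Set.Finite.subset (Set.finite_singleton ([] : List ℕ))
  intro w hw
  simp only [Set.mem_setOf_eq, varTm] at hw
  by_cases h : w = []
  · simpa using h
  · rw [if_neg h] at hw; exact absurd rfl hw

/-- The identity substitution. -/
def idS : Subst Sig V ar := ⟨fun X => varTm X, fun X => varTm_fin X⟩

/-- A clause `head ← B₀, …, Bₙ`.  (Goal clauses are clauses whose head is built
from the reserved goal symbol `?` of the signature.) -/
structure Clause (Sig V : Type) (ar : Sig → ℕ) where
  head : Tm Sig V ar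
  body : List (Tm Sig V ar)

/-- A logic program: a function from `{0, …, n} ⊆ ℕ` to (non-goal) clauses,
encoded as a non-empty list of clauses. -/
structure Prog (Sig V : Type) (ar : Sig → ℕ) where
  clauses : List (Clause Sig V ar)
  ne : clauses ≠ []

/-- Application of a substitution to a term tree, as a term tree (the label
function of the result is `sapp σ t`). -/
noncomputable def appT (σ : Subst Sig V ar) (t : Tm Sig V ar) : Tm Sig V ar :=
  if h : ∃ t' : Tm Sig V ar, t'.label = sapp σ t then h.choose else t

/-- Application of a substitution to a clause, homomorphically. -/
noncomputable def appC (σ : Subst Sig V ar) (C : Clause Sig V ar) : Clause Sig V ar :=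
  ⟨appT σ C.head, C.body.map (appT σ)⟩

/-- Composition of substitutions: `(compS σ' σ)(X) = σ'(σ(X))`. -/
noncomputable def compS (σ' σ : Subst Sig V ar) : Subst Sig V ar :=
  if h : ∃ τ : Subst Sig V ar, ∀ X, (τ.toFun X).label = sapp σ' (σ.toFun X) then
    h.choose
  else σ'

/-- The substitution renaming variables along `ρ`. -/
def renSubst (ρ : V → V) : Subst Sig V ar := ⟨fun X => varTm (ρ X), fun X => varTm_fin (ρ X)⟩

/-- `C'` is obtained from `C` by (injectively) renaming its variables. -/
def IsRenaming (C C' : Clause Sig V ar) : Prop :=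
  ∃ ρ : V → V, Function.Injective ρ ∧
    C'.head.label = sapp (renSubst ρ) C.head ∧
    C'.body.length = C.body.length ∧
    ∀ (j : ℕ) (t t' : Tm Sig V ar), C.body[j]? = some t → C'.body[j]? = some t' →
      t'.label = sapp (renSubst ρ) t

/-- Labels of nodes of rewriting trees: term trees (and-nodes), clauses
(or-nodes), or Tier 2 variables from `VR` (variable or-nodes). -/
abbrev RLab (Sig V : Type) (ar : Sig → ℕ) (VR : Type) : Type :=
  Tm Sig V ar ⊕ (Clause Sig V ar ⊕ VR)

/-- A fixed scheme of proof-search data: a deterministic most general matcher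
and most general unifier algorithm, a renaming-apart scheme for program
clauses (renaming determined by the node at which the clause is used, as in
the renaming-apart convention), and a scheme of fresh Tier 2 variables
(likewise determined by the node). -/
structure Scheme (Sig V : Type) (ar : Sig → ℕ) (VR : Type) where
  mgm : Tm Sig V ar → Tm Sig V ar → Option (Subst Sig V ar)
  mgm_sound : ∀ t u θ, mgm t u = some θ → IsMGM θ t u
  mgm_complete : ∀ t u, (∃ θ : Subst Sig V ar, IsMatcher θ t u) → (mgm t u).isSome
  mgu : Tm Sig V ar → Tm Sig V ar → Option (Subst Sig V ar)
  mgu_sound : ∀ t u σ, mgu t u = some σ → IsMGU σ t u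
  mgu_complete : ∀ t u, (∃ σ : Subst Sig V ar, IsUnifier σ t u) → (mgu t u).isSome
  ren : List ℕ → Clause Sig V ar → Clause Sig V ar
  ren_renaming : ∀ w C, IsRenaming C (ren w C)
  fresh : List ℕ → VR
  fresh_inj : Function.Injective fresh

variable {VR : Type}

/-- Conditions (1)–(4) of the definition of the rewriting tree `rew(P, C, σ)`
(Definition 4.1): (1) the root is labelled `σ(C)` and its children are the
body of `σ(C)`; (2) or-nodes are clauses or Tier 2 variables, Tier 2 variable
nodes are leaves, and the children of an or-node labelled by a clause `B`
(which is `σ(θ(P(i)))` by (3)) are the body terms `σ(θ(P(i)(j)))` of `B`;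
(3) each and-node `T(w)` (a term) has, for every clause index `i` of `P`, the
child `T(wi) = σ(θ(P(i)))` if `head(P(i))` matches `T(w)` via the mgm `θ`
(with `P(i)` renamed apart at node `wi`), and a fresh Tier 2 variable
(determined by the node `wi`) otherwise; (4) no other words are in the
domain. -/
def RewSpec (S : Scheme Sig V ar VR) (P : Prog Sig V ar) (C : Clause Sig V ar)
    (σ : Subst Sig V ar) (T : List ℕ → Option (RLab Sig V ar VR)) : Prop :=
  T [] = some (Sum.inr (Sum.inl (appC σ C))) ∧
  (∀ (w : List ℕ) (B : Clause Sig V ar), T w = some (Sum.inr (Sum.inl B)) →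
    ∀ j : ℕ, T (w ++ [j]) = (B.body[j]?).map Sum.inl) ∧
  (∀ (w : List ℕ) (X : VR), T w = some (Sum.inr (Sum.inr X)) →
    ∀ i : ℕ, T (w ++ [i]) = none) ∧
  (∀ (w : List ℕ) (t : Tm Sig V ar), T w = some (Sum.inl t) →
    ∀ i : ℕ, T (w ++ [i]) =
      match P.clauses[i]? with
      | none => none
      | some Ci =>
        match S.mgm (S.ren (w ++ [i]) Ci).head t with
        | some θ => some (Sum.inr (Sum.inl (appC σ (appC θ (S.ren (w ++ [i]) Ci)))))
        | none => some (Sum.inr (Sum.inr (S.fresh (w ++ [i]))))) ∧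
  (∀ (w : List ℕ) (i : ℕ), T (w ++ [i]) ≠ none → T w ≠ none)

/-- The rewriting tree `rew(P, C, σ)` (as a label function). -/
noncomputable def rew (S : Scheme Sig V ar VR) (P : Prog Sig V ar)
    (C : Clause Sig V ar) (σ : Subst Sig V ar) : List ℕ → Option (RLab Sig V ar VR) :=
  if h : ∃ T, RewSpec S P C σ T then h.choose else fun _ => none

/-- Application of a substitution to the label of a node of a rewriting tree
(identity on Tier 2 variables). -/
noncomputable def rlabApp (σ : Subst Sig V ar) :
    RLab Sig V ar VR → RLab Sig V ar VR
  | Sum.inl t => Sum.inl (appT σ t)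
  | Sum.inr (Sum.inl B) => Sum.inr (Sum.inl (appC σ B))
  | Sum.inr (Sum.inr X) => Sum.inr (Sum.inr X)

/-- Definition 4.4: the application `σ'(T)` of a substitution `σ'` to a
rewriting tree `T = rew(P, C, σ)`: on and-nodes and non-variable or-nodes it
acts label-wise; below a Tier 2 variable or-node `T(wi)` whose parent
and-node is labelled `t`, if the mgm `θ` of `head(P(i))` (renamed apart at
`wi`) against `σ'(t) = (σ'(T))(w)` exists then `(σ'(T))(wiv) =
rew(P, θ(P(i)), σ'σ)(v)`, and otherwise `(σ'(T))(wi) = T(wi)` is unchanged. -/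
noncomputable def rsub (S : Scheme Sig V ar VR) (P : Prog Sig V ar)
    (σ' σ : Subst Sig V ar) (T : List ℕ → Option (RLab Sig V ar VR)) :
    List ℕ → Option (RLab Sig V ar VR) := fun w =>
  if h : ∃ p : List ℕ × ℕ × List ℕ × Tm Sig V ar,
      w = (p.1 ++ [p.2.1]) ++ p.2.2.1 ∧
      (∃ X : VR, T (p.1 ++ [p.2.1]) = some (Sum.inr (Sum.inr X))) ∧
      T p.1 = some (Sum.inl p.2.2.2) then
    match P.clauses[h.choose.2.1]? with
    | none => T w
    | some Ci =>
      match S.mgm (S.ren (h.choose.1 ++ [h.choose.2.1]) Ci).head (appT σ' h.choose.2.2.2) with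
      | some θ =>
          rew S P (appC θ (S.ren (h.choose.1 ++ [h.choose.2.1]) Ci)) (compS σ' σ) h.choose.2.2.1
      | none => T w
  else (T w).map (rlabApp σ')

def nodeLabel (f : Sig) (ts : List (Tm Sig V ar)) : List ℕ → Option (Sig ⊕ V)
  | [] => some (Sum.inl f)
  | i :: w =>
    match ts[i]? with
    | some t => t.label w
    | none => none

lemma nodeLabel_cons_ne {f : Sig} {ts : List (Tm Sig V ar)} {i : ℕ} {w : List ℕ} :
    nodeLabel f ts (i :: w) ≠ none ↔ ∃ t, ts[i]? = some t ∧ t.label w ≠ none := by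
  cases h : ts[i]? with
  | none => simp [nodeLabel, h]
  | some t => simp [nodeLabel, h]

lemma ncard_Iio (n : ℕ) : (Set.Iio n).ncard = n := by
  rw [← Finset.coe_Iio, Set.ncard_coe_finset, Nat.card_Iio]

/-- Building a term tree from a root function symbol and a list of immediate
subtrees whose length is the arity of the root symbol. -/
def nodeTm (f : Sig) (ts : List (Tm Sig V ar)) (h : ar f = ts.length) :
    Tm Sig V ar where
  label := nodeLabel f ts
  root := by simp [nodeLabel]
  tl := by
    refine ⟨?_, ?_, ?_⟩
    · intro w j hwj
      match w with
      | [] => simp [Set.mem_setOf_eq, nodeLabel]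
      | i :: w' =>
        simp only [List.cons_append, Set.mem_setOf_eq, nodeLabel_cons_ne] at hwj ⊢
        obtain ⟨t, hts, hl⟩ := hwj
        exact ⟨t, hts, t.tl.1 w' j hl⟩
    · intro w i j hwj hij
      match w with
      | [] =>
        simp only [List.nil_append, Set.mem_setOf_eq, nodeLabel_cons_ne] at hwj ⊢
        obtain ⟨t, hts, -⟩ := hwj
        have hj : j < ts.length := (List.getElem?_eq_some_iff.mp hts).1
        have hi : i < ts.length := lt_trans hij hj
        exact ⟨ts[i], List.getElem?_eq_getElem hi, (ts[i]).root⟩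
      | k :: w' =>
        simp only [List.cons_append, Set.mem_setOf_eq, nodeLabel_cons_ne] at hwj ⊢
        obtain ⟨t, hts, hl⟩ := hwj
        exact ⟨t, hts, t.tl.2.1 w' i j hl hij⟩
    · intro w hw
      match w with
      | [] =>
        apply Set.Finite.subset (Set.finite_Iio ts.length)
        intro i hi
        simp only [List.nil_append, Set.mem_setOf_eq, nodeLabel_cons_ne] at hi
        obtain ⟨t, hts, -⟩ := hi
        exact (List.getElem?_eq_some_iff.mp hts).1
      | k :: w' =>
        simp only [Set.mem_setOf_eq, nodeLabel_cons_ne] at hw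
        obtain ⟨t, hts, hl⟩ := hw
        have hfin := t.tl.2.2 w' hl
        apply Set.Finite.subset hfin
        intro i hi
        simp only [List.cons_append, Set.mem_setOf_eq, nodeLabel_cons_ne, hts] at hi
        obtain ⟨t', ht', hl'⟩ := hi
        cases Option.some.inj ht'
        exact hl'
  arity := by
    intro w a hwa
    match w with
    | [] =>
      have ha : Sum.inl f = a := Option.some.inj hwa
      subst ha
      have hset : { i : ℕ | nodeLabel f ts ([] ++ [i]) ≠ none } = Set.Iio ts.length := by
        ext i
        simp only [List.nil_append, Set.mem_setOf_eq, nodeLabel_cons_ne, Set.mem_Iio]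
        constructor
        · rintro ⟨t, hts, -⟩
          exact (List.getElem?_eq_some_iff.mp hts).1
        · intro hi
          exact ⟨ts[i], List.getElem?_eq_getElem hi, (ts[i]).root⟩
      rw [hset, ncard_Iio]
      simpa using h.symm
    | k :: w' =>
      have hne : nodeLabel f ts (k :: w') ≠ none := by rw [hwa]; simp
      rw [nodeLabel_cons_ne] at hne
      obtain ⟨t, hts, -⟩ := hne
      have hl : t.label w' = some a := by
        simpa [nodeLabel, hts] using hwa
      have := t.arity w' a hl
      rw [← this]
      congr 1
      ext i
      simp [List.cons_append, nodeLabel_cons_ne, hts]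

end T3C

namespace T3C

/-- The signature Σ₁ ∪ {?} = {nat/1, s/1, 0/0} together with the goal symbol `?`. -/
inductive Sig1 : Type
  | nat : Sig1
  | s : Sig1
  | zero : Sig1
  | qm : Sig1

def ar1 : Sig1 → ℕ
  | Sig1.nat => 1
  | Sig1.s => 1
  | Sig1.zero => 0
  | Sig1.qm => 0

variable {V : Type}

/-- The program `P₁ = {nat(0) ← ;  nat(s(X)) ← nat(X)}` (with variable `X`). -/
def P1 (X : V) : Prog Sig1 V ar1 :=
  ⟨[⟨nodeTm Sig1.nat [nodeTm Sig1.zero [] rfl] rfl, []⟩,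
    ⟨nodeTm Sig1.nat [nodeTm Sig1.s [varTm X] rfl] rfl,
     [nodeTm Sig1.nat [varTm X] rfl]⟩], by simp⟩

/-- The goal clause `? ← t`. -/
def goalClause (t : Tm Sig1 V ar1) : Clause Sig1 V ar1 :=
  ⟨nodeTm Sig1.qm [] rfl, [t]⟩

end T3C

namespace T3C

section Substitution

variable {Sig V : Type} {ar : Sig → ℕ}

def Tm.dom (t : Tm Sig V ar) : Set (List ℕ) := {w | t.label w ≠ none}

theorem Tm.ext_label {t t' : Tm Sig V ar} (h : t.label = t'.label) : t = t' := by
  cases t; cases t'; cases h; rfl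

theorem append_eq_none_of_eq_none {α : Type*} {T : List ℕ → Option α}
    (hpre : ∀ w i, T (w ++ [i]) ≠ none → T w ≠ none) {u : List ℕ} (h : T u = none)
    (v : List ℕ) : T (u ++ v) = none := by
  induction v using List.reverseRecOn with
  | nil => simpa using h
  | append_singleton v i ih =>
    rw [← List.append_assoc]
    by_contra hc
    exact hpre _ i hc ih

theorem Tm.label_append_eq_none (t : Tm Sig V ar) {u : List ℕ} (h : t.label u = none)
    (v : List ℕ) : t.label (u ++ v) = none :=
  append_eq_none_of_eq_none t.tl.1 h v

theorem Tm.label_append_of_var (t : Tm Sig V ar) {u : List ℕ} {X : V}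
    (h : t.label u = some (Sum.inr X)) {v : List ℕ} (hv : v ≠ []) :
    t.label (u ++ v) = none := by
  obtain ⟨i, v, rfl⟩ := List.exists_cons_of_ne_nil hv
  have hchildren : {i | t.label (u ++ [i]) ≠ none} = ∅ :=
    (Set.ncard_eq_zero (t.tl.2.2 u (by simp [h]))).mp (t.arity u _ h)
  have hi : t.label (u ++ [i]) = none := by
    by_contra hi
    exact (Set.eq_empty_iff_forall_notMem.mp hchildren) i hi
  simpa using t.label_append_eq_none hi v

theorem subAppAux_cons_of_not_var {σ : V → Tm Sig V ar} {t : Tm Sig V ar} {p : List ℕ}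
    (h : ∀ X, t.label p ≠ some (Sum.inr X)) (i : ℕ) (w : List ℕ) :
    subAppAux σ t p (i :: w) = subAppAux σ t (p ++ [i]) w := by
  simp only [subAppAux]

theorem subAppAux_append_of_var (σ : V → Tm Sig V ar) (t : Tm Sig V ar) {p q : List ℕ}
    {X : V} (h : t.label (p ++ q) = some (Sum.inr X)) (v : List ℕ) :
    subAppAux σ t p (q ++ v) = (σ X).label v := by
  induction q generalizing p with
  | nil => cases v <;> simp_all [subAppAux]
  | cons i q ih =>
    have hp : ∀ Y, t.label p ≠ some (Sum.inr Y) := fun Y hY => by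
      simpa [h] using t.label_append_of_var hY (v := i :: q) (by simp)
    rw [List.cons_append, subAppAux_cons_of_not_var hp]
    exact ih (by simpa using h)

theorem subAppAux_of_not_var (σ : V → Tm Sig V ar) (t : Tm Sig V ar) {p w : List ℕ}
    (h : ∀ q, q <+: w → ∀ X, t.label (p ++ q) ≠ some (Sum.inr X)) :
    subAppAux σ t p w = t.label (p ++ w) := by
  induction w generalizing p with
  | nil =>
    have hp := h [] List.nil_prefix
    simp only [List.append_nil] at hp ⊢
    simp only [subAppAux]
    | cons i w ih =>
    rw [subAppAux_cons_of_not_var (by simpa using h [] List.nil_prefix), ih]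
    · simp
    · intro q hq X
      simpa using h (i :: q) (List.cons_prefix_cons.mpr ⟨rfl, hq⟩) X

theorem sapp_append_of_var (σ : Subst Sig V ar) {t : Tm Sig V ar} {u : List ℕ} {X : V}
    (h : t.label u = some (Sum.inr X)) (v : List ℕ) :
    sapp σ t (u ++ v) = (σ.toFun X).label v :=
  subAppAux_append_of_var σ.toFun t (p := []) (by simpa using h) v

theorem sapp_of_not_var (σ : Subst Sig V ar) {t : Tm Sig V ar} {w : List ℕ}
    (h : ∀ u, u <+: w → ∀ X, t.label u ≠ some (Sum.inr X)) : sapp σ t w = t.label w := by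
  simpa [sapp] using subAppAux_of_not_var σ.toFun t (p := []) (by simpa using h)

/-- Locally, at any position, `σ(t)` looks like some term tree: either `t` itself or the
image `σ(X)` of a variable of `t` grafted above that position. -/
theorem sapp_locally_eq (σ : Subst Sig V ar) (t : Tm Sig V ar) (w : List ℕ) :
    ∃ (s : Tm Sig V ar) (v : List ℕ), sapp σ t w = s.label v ∧
      ∀ i, sapp σ t (w ++ [i]) = none ↔ s.label (v ++ [i]) = none := by
  by_cases hvar : ∃ u, u <+: w ∧ ∃ X, t.label u = some (Sum.inr X)
  · obtain ⟨u, ⟨v, rfl⟩, X, hX⟩ := hvar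
    refine ⟨σ.toFun X, v, sapp_append_of_var σ hX v, fun i => ?_⟩
    rw [List.append_assoc, sapp_append_of_var σ hX]
  · push Not at hvar
    refine ⟨t, w, sapp_of_not_var σ hvar, fun i => ?_⟩
    by_cases hi : ∃ Y, t.label (w ++ [i]) = some (Sum.inr Y)
    · obtain ⟨Y, hY⟩ := hi
      have h := sapp_append_of_var σ hY []
      simp only [List.append_nil] at h
      simp [h, hY, (σ.toFun Y).root]
    · push Not at hi
      rw [sapp_of_not_var σ fun u hu => ?_]
      rcases List.prefix_concat_iff.mp hu with rfl | hu
      · exact hi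
      · exact hvar u hu

theorem sapp_nil_ne_none (σ : Subst Sig V ar) (t : Tm Sig V ar) : sapp σ t [] ≠ none := by
  by_cases hX : ∃ X, t.label [] = some (Sum.inr X)
  · obtain ⟨X, hX⟩ := hX
    simpa using (sapp_append_of_var σ hX []).trans_ne (σ.toFun X).root
  · push Not at hX
    rw [sapp_of_not_var σ fun u hu => by rw [List.prefix_nil.mp hu]; exact hX]
    exact t.root

theorem exists_label_eq_sapp (σ : Subst Sig V ar) (t : Tm Sig V ar) :
    ∃ t' : Tm Sig V ar, t'.label = sapp σ t := by
  refine ⟨⟨sapp σ t, sapp_nil_ne_none σ t, ⟨?_, ?_, ?_⟩, ?_⟩, rfl⟩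
  · intro w j hj
    obtain ⟨s, v, hw, hch⟩ := sapp_locally_eq σ t w
    simpa [hw] using s.tl.1 v j (by simpa [hch] using hj)
  · intro w i j hj hij
    obtain ⟨s, v, -, hch⟩ := sapp_locally_eq σ t w
    simpa [hch] using s.tl.2.1 v i j (by simpa [hch] using hj) hij
  · intro w hw
    obtain ⟨s, v, hw', hch⟩ := sapp_locally_eq σ t w
    simpa [hch] using s.tl.2.2 v (by simpa [hw'] using hw)
  · intro w a ha
    obtain ⟨s, v, hw, hch⟩ := sapp_locally_eq σ t w
    simpa [hch] using s.arity v a (hw ▸ ha)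

theorem appT_label (σ : Subst Sig V ar) (t : Tm Sig V ar) : (appT σ t).label = sapp σ t := by
  rw [appT, dif_pos (exists_label_eq_sapp σ t)]
  exact (exists_label_eq_sapp σ t).choose_spec

theorem IsMatcher.appT_eq {θ : Subst Sig V ar} {t u : Tm Sig V ar} (h : IsMatcher θ t u) :
    appT θ t = u :=
  Tm.ext_label ((appT_label θ t).trans h)

theorem appT_fin (σ : Subst Sig V ar) {t : Tm Sig V ar} (ht : t.Fin) : (appT σ t).Fin := by
  have hvar : ∀ u, {X | t.label u = some (Sum.inr X)}.Subsingleton :=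
    fun u X hX Y hY => Sum.inr_injective (Option.some_injective _ (hX.symm.trans hY))
  refine (ht.union (ht.biUnion fun u _ => (hvar u).finite.biUnion fun X _ =>
    (σ.fin X).image (u ++ ·))).subset fun w hw => ?_
  replace hw : sapp σ t w ≠ none := by simpa [appT_label] using hw
  by_cases hw' : ∃ u, u <+: w ∧ ∃ X, t.label u = some (Sum.inr X)
  · obtain ⟨u, ⟨v, rfl⟩, X, hX⟩ := hw'
    rw [sapp_append_of_var σ hX] at hw
    exact Or.inr (Set.mem_biUnion (by simp [hX]) (Set.mem_biUnion hX ⟨v, hw, rfl⟩))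
  · push Not at hw'
    exact Or.inl (by simpa [sapp_of_not_var σ hw'] using hw)

theorem appT_appT_of_idem {σ : Subst Sig V ar} (hσ : Idem σ) (t : Tm Sig V ar) :
    appT σ (appT σ t) = appT σ t := by
  set u := appT σ t with hu_def
  have hu : u.label = sapp σ t := appT_label σ t
  refine Tm.ext_label (funext fun w => ?_)
  rw [appT_label]
  by_cases hw : ∃ p, p <+: w ∧ ∃ Y, u.label p = some (Sum.inr Y)
  · obtain ⟨p, ⟨v, rfl⟩, Y, hY⟩ := hw
    rw [sapp_append_of_var σ hY]
    by_cases hp : ∃ q, q <+: p ∧ ∃ Z, t.label q = some (Sum.inr Z)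
    · obtain ⟨q, ⟨q', rfl⟩, Z, hZ⟩ := hp
      rw [hu, sapp_append_of_var σ hZ] at hY
      rw [hu, List.append_assoc, sapp_append_of_var σ hZ, ← hσ Z, sapp_append_of_var σ hY]
    · push Not at hp
      rw [hu, sapp_of_not_var σ hp] at hY
      exact absurd hY (hp p List.prefix_rfl Y)
  · push Not at hw
    exact sapp_of_not_var σ hw

end Substitution

section Constructors

variable {Sig V : Type} {ar : Sig → ℕ}

theorem sapp_cons (σ : Subst Sig V ar) {t r : Tm Sig V ar} {i : ℕ}
    (hroot : ∀ X, t.label [] ≠ some (Sum.inr X)) (hsub : ∀ v, t.label (i :: v) = r.label v)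
    (v : List ℕ) : sapp σ t (i :: v) = sapp σ r v := by
  suffices h : ∀ p, subAppAux σ.toFun t (i :: p) v = subAppAux σ.toFun r p v by
    simpa [sapp, subAppAux_cons_of_not_var hroot] using h []
  induction v with
  | nil => simp [subAppAux, hsub]
  | cons j v ih => simp [subAppAux, hsub, ih]

theorem appT_varTm (σ : Subst Sig V ar) (X : V) : appT σ (varTm X) = σ.toFun X :=
  Tm.ext_label (funext fun v => by
    simpa [appT_label] using sapp_append_of_var σ (t := varTm X) (u := []) (by simp [varTm]) v)

theorem appT_nodeTm (σ : Subst Sig V ar) (f : Sig) (ts : List (Tm Sig V ar))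
    (h : ar f = ts.length) :
    appT σ (nodeTm f ts h) = nodeTm f (ts.map (appT σ)) (by simpa using h) := by
  refine Tm.ext_label (funext fun w => ?_)
  rw [appT_label]
  have hroot : ∀ X, (nodeTm f ts h).label [] ≠ some (Sum.inr X) := by simp [nodeTm, nodeLabel]
  rcases w with _ | ⟨i, v⟩
  · simpa [nodeTm, nodeLabel] using sapp_of_not_var σ (t := nodeTm f ts h) (w := [])
      fun u hu => by rw [List.prefix_nil.mp hu]; exact hroot
  rcases hi : ts[i]? with _ | r
  · have hnone : ∀ q, (nodeTm f ts h).label (i :: q) = none := by simp [nodeTm, nodeLabel, hi]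
    rw [sapp_of_not_var σ fun u hu => ?_]
    · simp [nodeTm, nodeLabel, hi]
    · rcases List.prefix_cons_iff.mp hu with rfl | ⟨q, rfl, -⟩
      · exact hroot
      · simp [hnone]
  · rw [sapp_cons σ hroot (r := r) (by simp [nodeTm, nodeLabel, hi])]
    simp [nodeTm, nodeLabel, hi, appT_label]

theorem nodeTm_singleton_injective {f : Sig} {a b : Tm Sig V ar} {ha : ar f = 1}
    {hb : ar f = 1} (h : nodeTm f [a] ha = nodeTm f [b] hb) : a = b :=
  Tm.ext_label (funext fun v => congrArg (fun t : Tm Sig V ar => t.label (0 :: v)) h)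

theorem Tm.dom_nodeTm_singleton (f : Sig) (a : Tm Sig V ar) (h : ar f = 1) :
    (nodeTm f [a] h).dom = insert [] (List.cons 0 '' a.dom) := by
  ext (_ | ⟨_ | i, v⟩) <;> simp [Tm.dom, nodeTm, nodeLabel]

theorem Tm.fin_nodeTm_singleton {f : Sig} {a : Tm Sig V ar} {h : ar f = 1} :
    (nodeTm f [a] h).Fin ↔ a.Fin := by
  rw [Tm.Fin, ← Tm.dom, Tm.dom_nodeTm_singleton, Set.finite_insert,
    Set.finite_image_iff List.cons_injective.injOn]
  rfl

theorem Tm.ncard_dom_nodeTm_singleton {f : Sig} {a : Tm Sig V ar} (h : ar f = 1)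
    (ha : a.Fin) : (nodeTm f [a] h).dom.ncard = a.dom.ncard + 1 := by
  have ha' : a.dom.Finite := ha
  rw [Tm.dom_nodeTm_singleton, Set.ncard_insert_of_notMem (by simp) (ha'.image _),
    Set.ncard_image_of_injective _ List.cons_injective]

end Constructors

section RewritingTrees

variable {Sig V VR : Type} {ar : Sig → ℕ}

theorem IsRenaming.exists_eq_appC {C C' : Clause Sig V ar} (h : IsRenaming C C') :
    ∃ ρ : V → V, C' = appC (renSubst ρ) C := by
  obtain ⟨ρ, -, hhead, hlen, hbody⟩ := h
  refine ⟨ρ, ?_⟩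
  obtain ⟨head', body'⟩ := C'
  simp only [appC, Clause.mk.injEq]
  refine ⟨Tm.ext_label (hhead.trans (appT_label _ _).symm),
    List.ext_getElem (by simpa using hlen) fun j h₁ h₂ => Tm.ext_label ?_⟩
  rw [List.getElem_map, appT_label]
  exact hbody j _ _ (List.getElem?_eq_getElem _) (List.getElem?_eq_getElem h₁)

def SubtreeFinite {α : Type*} (T : List ℕ → Option α) (w : List ℕ) : Prop :=
  {v | T (w ++ v) ≠ none}.Finite

theorem subtreeFinite_of_children {α : Type*} {T : List ℕ → Option α}
    (hpre : ∀ w i, T (w ++ [i]) ≠ none → T w ≠ none) {w : List ℕ} (n : ℕ)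
    (hn : ∀ i, n ≤ i → T (w ++ [i]) = none) (hch : ∀ i < n, SubtreeFinite T (w ++ [i])) :
    SubtreeFinite T w := by
  refine (((Set.finite_Iio n).biUnion fun i hi => (hch i hi).image (List.cons i)).insert
    []).subset fun v hv => ?_
  rcases v with _ | ⟨i, v⟩
  · exact Set.mem_insert _ _
  have hv : T (w ++ [i] ++ v) ≠ none := by simpa using hv
  have hi : i < n := by
    by_contra hi
    exact hv (append_eq_none_of_eq_none hpre (hn i (not_lt.mp hi)) v)
  exact Set.mem_insert_of_mem _ (Set.mem_biUnion hi ⟨v, hv, rfl⟩)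

variable {S : Scheme Sig V ar VR} {P : Prog Sig V ar} {C : Clause Sig V ar}
  {σ : Subst Sig V ar} {T : List ℕ → Option (RLab Sig V ar VR)} {w : List ℕ}

theorem RewSpec.subtreeFinite_of_tier2 (hT : RewSpec S P C σ T) {x : VR}
    (hw : T w = some (Sum.inr (Sum.inr x))) : SubtreeFinite T w :=
  subtreeFinite_of_children hT.2.2.2.2 0 (fun i _ => hT.2.2.1 w x hw i) (by simp)

theorem RewSpec.subtreeFinite_of_clause (hT : RewSpec S P C σ T) {B : Clause Sig V ar}
    (hw : T w = some (Sum.inr (Sum.inl B)))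
    (hch : ∀ j u, T (w ++ [j]) = some (Sum.inl u) → SubtreeFinite T (w ++ [j])) :
    SubtreeFinite T w :=
  subtreeFinite_of_children hT.2.2.2.2 B.body.length
    (fun j hj => by rw [hT.2.1 w B hw j, List.getElem?_eq_none hj]; rfl)
    (fun j hj => hch j _ (by rw [hT.2.1 w B hw j, List.getElem?_eq_getElem hj]; rfl))

theorem RewSpec.subtreeFinite_of_term (hT : RewSpec S P C σ T) {u : Tm Sig V ar}
    (hw : T w = some (Sum.inl u)) (hch : ∀ i < P.clauses.length, SubtreeFinite T (w ++ [i])) :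
    SubtreeFinite T w :=
  subtreeFinite_of_children hT.2.2.2.2 P.clauses.length
    (fun i hi => by rw [hT.2.2.2.1 w u hw i, List.getElem?_eq_none hi]) hch

theorem RewSpec.subtreeFinite_of_match (hT : RewSpec S P C σ T) {u : Tm Sig V ar}
    (hw : T w = some (Sum.inl u)) {i : ℕ} {Ci : Clause Sig V ar} (hi : P.clauses[i]? = some Ci)
    (hch : ∀ θ j b, IsMatcher θ (S.ren (w ++ [i]) Ci).head u →
      (S.ren (w ++ [i]) Ci).body[j]? = some b →
      T (w ++ [i] ++ [j]) = some (Sum.inl (appT σ (appT θ b))) →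
      SubtreeFinite T (w ++ [i] ++ [j])) :
    SubtreeFinite T (w ++ [i]) := by
  have h := hT.2.2.2.1 w u hw i
  simp only [hi] at h
  rcases hm : S.mgm (S.ren (w ++ [i]) Ci).head u with _ | θ <;> simp only [hm] at h
  · exact hT.subtreeFinite_of_tier2 h
  refine hT.subtreeFinite_of_clause h fun j _ hj => ?_
  have hj' := hT.2.1 _ _ h j
  rcases hb : (S.ren (w ++ [i]) Ci).body[j]? with _ | b
  · rw [hj'] at hj
    simp [appC, hb] at hj
  · exact hch θ j b (S.mgm_sound _ _ _ hm).1 hb (by rw [hj']; simp [appC, hb])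

end RewritingTrees

section ProgramP1

variable {V VR : Type}

def natT (a : Tm Sig1 V ar1) : Tm Sig1 V ar1 := nodeTm Sig1.nat [a] rfl

def succT (a : Tm Sig1 V ar1) : Tm Sig1 V ar1 := nodeTm Sig1.s [a] rfl

theorem appT_natT (σ : Subst Sig1 V ar1) (a : Tm Sig1 V ar1) :
    appT σ (natT a) = natT (appT σ a) :=
  appT_nodeTm σ Sig1.nat [a] rfl

theorem appT_succT (σ : Subst Sig1 V ar1) (a : Tm Sig1 V ar1) :
    appT σ (succT a) = succT (appT σ a) :=
  appT_nodeTm σ Sig1.s [a] rfl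

theorem P1_clause_zero (X : V) : ∃ C0, (P1 X).clauses[0]? = some C0 ∧ C0.body = [] :=
  ⟨_, rfl, rfl⟩

theorem P1_clause_one (X : V) :
    (P1 X).clauses[1]? = some ⟨natT (succT (varTm X)), [natT (varTm X)]⟩ :=
  rfl

theorem exists_eq_natT_succT_of_match {σ θ : Subst Sig1 V ar1} {Y : V} {u : Tm Sig1 V ar1}
    (hm : appT θ (natT (succT (varTm Y))) = u) (hfix : appT σ u = u) :
    ∃ r, u = natT (succT r) ∧ appT σ r = r ∧ appT σ (appT θ (natT (varTm Y))) = natT r := by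
  have hu : u = natT (succT (θ.toFun Y)) := by rw [← hm, appT_natT, appT_succT, appT_varTm]
  have hr : appT σ (θ.toFun Y) = θ.toFun Y := by
    rw [hu, appT_natT, appT_succT] at hfix
    exact nodeTm_singleton_injective (nodeTm_singleton_injective hfix)
  exact ⟨_, hu, hr, by rw [appT_natT, appT_natT, appT_varTm, hr]⟩

theorem RewSpec.subtreeFinite_P1 {S : Scheme Sig1 V ar1 VR} {X : V} {C : Clause Sig1 V ar1}
    {σ : Subst Sig1 V ar1} {T : List ℕ → Option (RLab Sig1 V ar1 VR)}
    (hT : RewSpec S (P1 X) C σ T) (u : Tm Sig1 V ar1) (w : List ℕ)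
    (hw : T w = some (Sum.inl u)) (hfix : appT σ u = u) (hfin : u.Fin) :
    SubtreeFinite T w := by
  induction hn : u.dom.ncard using Nat.strong_induction_on generalizing u w with
  | _ n ih =>
  refine hT.subtreeFinite_of_term hw fun i hi => ?_
  match i, hi with
  | 0, _ =>
    obtain ⟨C0, h0, hbody⟩ := P1_clause_zero X
    refine hT.subtreeFinite_of_match hw h0 fun θ j b _ hb _ => ?_
    obtain ⟨ρ, hρ⟩ := (S.ren_renaming (w ++ [0]) C0).exists_eq_appC
    rw [hρ] at hb
    simp [appC, hbody] at hb
  | 1, _ =>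
    refine hT.subtreeFinite_of_match hw (P1_clause_one X) fun θ j b hm hb hTb => ?_
    obtain ⟨ρ, hρ⟩ := (S.ren_renaming (w ++ [1])
      ⟨natT (succT (varTm X)), [natT (varTm X)]⟩).exists_eq_appC
    rw [hρ] at hm hb
    simp only [appC, List.map_cons, List.map_nil, appT_natT, appT_succT, appT_varTm, renSubst]
      at hm hb
    obtain ⟨rfl, rfl⟩ : j = 0 ∧ natT (varTm (ρ X)) = b := by
      simpa [List.getElem?_cons] using hb
    obtain ⟨r, rfl, hr, hbody⟩ := exists_eq_natT_succT_of_match hm.appT_eq hfix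
    have hrfin : r.Fin := Tm.fin_nodeTm_singleton.mp (Tm.fin_nodeTm_singleton.mp hfin)
    have hsize : (natT r).dom.ncard < (natT (succT r)).dom.ncard := by
      have h₁ : (natT r).dom.ncard = r.dom.ncard + 1 := Tm.ncard_dom_nodeTm_singleton _ hrfin
      have h₂ : (natT (succT r)).dom.ncard = (succT r).dom.ncard + 1 :=
        Tm.ncard_dom_nodeTm_singleton _ (Tm.fin_nodeTm_singleton.mpr hrfin)
      have h₃ : (succT r).dom.ncard = r.dom.ncard + 1 := Tm.ncard_dom_nodeTm_singleton _ hrfin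
      omega
    rw [hbody] at hTb
    exact ih _ (hn ▸ hsize) (natT r) _ hTb (by rw [appT_natT, hr])
      (Tm.fin_nodeTm_singleton.mpr hrfin) rfl

end ProgramP1

end T3C

open T3C in
theorem statement17_general {V VR : Type}
    (S : Scheme Sig1 V ar1 VR) (X : V)
    (t : Tm Sig1 V ar1) (ht : t.Fin)
    (σ : Subst Sig1 V ar1) (hσ : Idem σ)
    (T : List ℕ → Option (RLab Sig1 V ar1 VR))
    (hT : RewSpec S (P1 X) (goalClause t) σ T) :
    ({ w | T w ≠ none } : Set (List ℕ)).Finite := by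
  have hroot : SubtreeFinite T [] := hT.subtreeFinite_of_clause hT.1 fun j u hj => by
    have hbody := hT.2.1 [] _ hT.1 j
    obtain ⟨rfl, rfl⟩ : j = 0 ∧ appT σ t = u := by
      rw [hbody] at hj
      simpa [appC, goalClause, List.getElem?_cons] using hj
    exact hT.subtreeFinite_P1 _ _ hj (appT_appT_of_idem hσ t) (appT_fin σ ht)
  simpa [SubtreeFinite] using hroot

open T3C in
/-- for every goal clause `? ← t` with `t` a finite term over
Σ₁ and every idempotent substitution `σ`, the rewriting tree
`rew(P₁, ? ← t, σ)` is finite; that is, `P₁` is observationally productive. -/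
theorem statement17 {V VR : Type} [Countable V] [Infinite V]
    [Countable VR] [Infinite VR]
    (S : Scheme Sig1 V ar1 VR) (X : V)
    (t : Tm Sig1 V ar1) (ht : t.Fin)
    (htq : ∀ w : List ℕ, t.label w ≠ some (Sum.inl Sig1.qm))
    (σ : Subst Sig1 V ar1) (hσ : Idem σ)
    (T : List ℕ → Option (RLab Sig1 V ar1 VR))
    (hT : RewSpec S (P1 X) (goalClause t) σ T) :
    ({ w | T w ≠ none } : Set (List ℕ)).Finite :=
  statement17_general S X t ht σ hσ T hT
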